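/- Let B be a skew-symmetric N×N integer matrix, k ∈ {1,…,N}, and let μ_k be the corresponding seed mutation of y-variables in ℚ(y_1,…,y_N). For m = (m_1,…,m_N) ∈ ℤ^N write y^m = Π_{i=1}^{N} y_i^{m_i}. If B·m = 0, then the mutated variables satisfy Π_{i=1}^{N} (y′_i)^{m_i} = y^{A_k·m}, and moreover A_k·m ∈ ℤ^N lies in the kernel of the mutated matrix: μ_k(B)·(A_k·m) = 0. (Thus Laurent monomial Casimirs of B are carried by μ_k to Laurent monomial Casimirs of μ_k(B).) -/

import Mathlib

/-! Skew-symmetry lets every mutated variable be written uniformly as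
`y'_i = (1 + y_k)^{b_ik} · y^{A_k e_i}`, with `A_k e_i` the `i`-th column of `A_k`.
Hence `y'^m = (1 + y_k)^{(Bᵀ m)_k} · y^{A_k m}`, and the first factor is trivial because
`(Bᵀ m)_k = -(B m)_k = 0`. Since `A_k` is an involution, `μ_k(B) A_k m = A_kᵀ B m = 0`. -/

noncomputable section

/-- A Y-seed: a signed adjacency (integer) matrix together with `y`-variables in a field. -/
structure YSeed (V K : Type) where
  B : Matrix V V ℤ
  y : V → K

/-- The matrix `A_k` attached to a matrix `B` and a vertex `k`. -/
def Amat {V : Type} [DecidableEq V] (B : Matrix V V ℤ) (k : V) : Matrix V V ℤ :=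
  Matrix.of fun i j =>
    if i = k then (if j = k then -1 else max (B k j) 0)
    else if i = j then 1 else 0

/-- Matrix mutation in direction `k`: `μ_k(B) = Aᵀ B A`. -/
def mutB {V : Type} [Fintype V] [DecidableEq V] (B : Matrix V V ℤ) (k : V) : Matrix V V ℤ :=
  (Amat B k).transpose * B * Amat B k

/-- Mutation of the `y`-variables in direction `k`. -/
def mutY {V : Type} [DecidableEq V] {K : Type} [Field K]
    (B : Matrix V V ℤ) (k : V) (y : V → K) : V → K := fun i =>
  if i = k then (y k)⁻¹
  else y i * (1 + y k) ^ max (B i k) 0 / (1 + (y k)⁻¹) ^ max (B k i) 0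

/-- Seed mutation in direction `k`. -/
def mutSeed {V : Type} [Fintype V] [DecidableEq V] {K : Type} [Field K]
    (s : YSeed V K) (k : V) : YSeed V K :=
  ⟨mutB s.B k, mutY s.B k s.y⟩

/-- Apply the seed mutations at the vertices of a list, head first. -/
def mutList {V : Type} [Fintype V] [DecidableEq V] {K : Type} [Field K]
    (s : YSeed V K) : List V → YSeed V K
  | [] => s
  | k :: ks => mutList (mutSeed s k) ks

/-- The action of a permutation of the vertices on a seed: it permutes the rows and
columns of `B` and sends `y i` to `y (σ i)`. -/
def permSeed {V K : Type} (σ : Equiv.Perm V) (s : YSeed V K) : YSeed V K :=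
  ⟨Matrix.of fun i j => s.B (σ i) (σ j), fun i => s.y (σ i)⟩

/-- The reflection associated with the oriented cycle `c 0 → c 1 → ⋯ → c (r-1) → c 0`:
the mutations at `c 0, …, c (r-2)` in this order, then the transposition of the vertices
`c (r-2)` and `c (r-1)`, then the mutations at `c (r-2), …, c 0` in this order. -/
def reflect {V : Type} [Fintype V] [DecidableEq V] {K : Type} [Field K]
    {r : ℕ} (c : Fin r → V) (s : YSeed V K) : YSeed V K :=
  if h : 2 ≤ r then
    let up : List V := ((List.finRange r).dropLast).map c
    mutList
      (permSeed (Equiv.swap (c ⟨r - 2, by omega⟩) (c ⟨r - 1, by omega⟩)) (mutList s up))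
      up.reverse
  else s

/-- The field of rational functions over `ℚ` with one generator for each vertex in `V`. -/
abbrev RF (V : Type) : Type := FractionRing (MvPolynomial V ℚ)

/-- The generators (the `y`-variables) of `RF V`. -/
def ygen (V : Type) : V → RF V := fun v =>
  algebraMap (MvPolynomial V ℚ) (RF V) (MvPolynomial.X v)

/-- The signed adjacency matrix of the standard `n`-cycle `0 → 1 → ⋯ → n-1 → 0` on the
vertex set `ZMod n` (for `n = 2` there are no edges). -/
def cycMat (n : ℕ) : Matrix (ZMod n) (ZMod n) ℤ :=
  if 3 ≤ n then Matrix.of (fun i j => if j = i + 1 then 1 else if i = j + 1 then -1 else 0)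
  else 0

open scoped Matrix

lemma Finset.prod_zpow_eq_zpow_sum₀ {G ι : Type*} [CommGroupWithZero G] {a : G} (ha : a ≠ 0)
    (s : Finset ι) (f : ι → ℤ) : ∏ i ∈ s, a ^ f i = a ^ ∑ i ∈ s, f i := by
  classical
  induction s using Finset.cons_induction with
  | empty => simp
  | cons j s hj ih => rw [Finset.prod_cons, Finset.sum_cons, ih, zpow_add₀ ha]

lemma prod_zpow_mulVec {K V W : Type*} [Field K] [Fintype V] [Fintype W] {y : V → K}
    (hy : ∀ j, y j ≠ 0) (A : Matrix V W ℤ) (m : W → ℤ) :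
    ∏ j, y j ^ (A *ᵥ m) j = ∏ i, (∏ j, y j ^ A j i) ^ m i := by
  simp only [Matrix.mulVec, dotProduct, ← Finset.prod_zpow_eq_zpow_sum₀ (hy _),
    ← Finset.prod_zpow, ← zpow_mul]
  exact Finset.prod_comm

section Mutation

variable {V K : Type} [DecidableEq V] [Field K] (B : Matrix V V ℤ) (k : V)

lemma Amat_mulVec_apply_of_ne [Fintype V] (v : V → ℤ) {i : V} (hik : i ≠ k) :
    (Amat B k *ᵥ v) i = v i := by
  simp [Matrix.mulVec, dotProduct, Amat, hik]

lemma prod_zpow_Amat_col [Fintype V] (y : V → K) (i : V) :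
    ∏ j, y j ^ Amat B k j i = if i = k then (y k)⁻¹ else y i * y k ^ max (B k i) 0 := by
  rw [Fintype.prod_eq_mul_prod_compl k]
  split_ifs with hik
  · subst hik
    rw [Finset.prod_eq_one fun j hj => ?_]
    · simp [Amat]
    · simp_all [Amat]
  · rw [Finset.prod_eq_single_of_mem i (by simpa using hik) fun j hj hji => ?_]
    · simp [Amat, hik, mul_comm]
    · simp_all [Amat]

lemma Amat_mulVec_apply_self [Fintype V] (v : V → ℤ) :
    (Amat B k *ᵥ v) k = -v k + ∑ j ∈ Finset.univ.erase k, max (B k j) 0 * v j := by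
  rw [Matrix.mulVec, dotProduct, ← Finset.add_sum_erase _ _ (Finset.mem_univ k)]
  congr 1
  · simp [Amat]
  · exact Finset.sum_congr rfl fun j hj => by simp [Amat, (Finset.mem_erase.mp hj).1]

lemma Amat_mulVec_Amat_mulVec [Fintype V] (v : V → ℤ) :
    Amat B k *ᵥ (Amat B k *ᵥ v) = v := by
  funext i
  obtain rfl | hik := eq_or_ne i k
  · have hsum : ∑ j ∈ Finset.univ.erase i, max (B i j) 0 * (Amat B i *ᵥ v) j
        = ∑ j ∈ Finset.univ.erase i, max (B i j) 0 * v j :=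
      Finset.sum_congr rfl fun j hj => by
        rw [Amat_mulVec_apply_of_ne B i v (Finset.mem_erase.mp hj).1]
    rw [Amat_mulVec_apply_self, Amat_mulVec_apply_self, hsum]
    ring
  · rw [Amat_mulVec_apply_of_ne B k _ hik, Amat_mulVec_apply_of_ne B k v hik]

lemma mutB_mulVec_Amat_mulVec [Fintype V] (v : V → ℤ) :
    mutB B k *ᵥ (Amat B k *ᵥ v) = (Amat B k)ᵀ *ᵥ (B *ᵥ v) := by
  rw [mutB, ← Matrix.mulVec_mulVec, ← Matrix.mulVec_mulVec, Amat_mulVec_Amat_mulVec]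

variable {B k}

lemma mutY_eq_mul_prod_zpow_Amat [Fintype V] {y : V → K} (hk : y k ≠ 0) (hk1 : 1 + y k ≠ 0)
    (hskew : ∀ i, B i k = -B k i) (i : V) :
    mutY B k y i = (1 + y k) ^ B i k * ∏ j, y j ^ Amat B k j i := by
  rw [prod_zpow_Amat_col, mutY]
  split_ifs with hik
  · subst hik
    simp [show B i i = 0 by linarith [hskew i]]
  · have hdual : 1 + (y k)⁻¹ = (1 + y k) * (y k)⁻¹ := by field_simp; ring
    rw [show max (B i k) 0 = B i k + max (B k i) 0 by rw [hskew i]; omega, zpow_add₀ hk1, hdual,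
      mul_zpow, inv_zpow]
    field_simp

lemma prod_mutY_zpow [Fintype V] {y : V → K} (hy : ∀ j, y j ≠ 0) (hk1 : 1 + y k ≠ 0)
    (hskew : ∀ i, B i k = -B k i) {m : V → ℤ} (hm : (B *ᵥ m) k = 0) :
    ∏ i, mutY B k y i ^ m i = ∏ i, y i ^ (Amat B k *ᵥ m) i := by
  have hcol : ∑ i, B i k * m i = 0 := by
    simp_rw [hskew, neg_mul, Finset.sum_neg_distrib]
    exact neg_eq_zero.mpr hm
  simp_rw [prod_zpow_mulVec hy, mutY_eq_mul_prod_zpow_Amat (hy k) hk1 hskew, mul_zpow,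
    Finset.prod_mul_distrib, ← zpow_mul, Finset.prod_zpow_eq_zpow_sum₀ hk1, hcol, zpow_zero,
    one_mul]

end Mutation

lemma ygen_ne_zero (V : Type) (v : V) : ygen V v ≠ 0 :=
  (map_ne_zero_iff _ (IsFractionRing.injective _ _)).mpr (MvPolynomial.X_ne_zero v)

lemma one_add_ygen_ne_zero (V : Type) (v : V) : 1 + ygen V v ≠ 0 := by
  rw [ygen, ← map_one (algebraMap (MvPolynomial V ℚ) (RF V)), ← map_add,
    map_ne_zero_iff _ (IsFractionRing.injective _ _)]
  intro h
  simpa using congrArg (MvPolynomial.coeff 0) h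

/-- if `m ∈ ℤᴺ` lies in the kernel of the skew-symmetric matrix `B`, then
the Laurent monomial `y^m` mutates into `y^{A_k m}`, and `A_k m` lies in the kernel of
the mutated matrix `μ_k(B)`. -/
theorem stmt18 (N : ℕ) (B : Matrix (Fin N) (Fin N) ℤ) (hskew : B.transpose = -B)
    (k : Fin N) (m : Fin N → ℤ) (hm : B.mulVec m = 0) :
    (∏ i, (mutY B k (ygen (Fin N)) i) ^ (m i))
      = (∏ i, (ygen (Fin N) i) ^ ((Amat B k).mulVec m i)) ∧
    (mutB B k).mulVec ((Amat B k).mulVec m) = 0 := by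
  have hskew_col : ∀ i, B i k = -B k i := fun i => by
    simpa using congrFun (congrFun hskew k) i
  refine ⟨prod_mutY_zpow (ygen_ne_zero _) (one_add_ygen_ne_zero _ k) hskew_col
    (congrFun hm k), ?_⟩
  rw [mutB_mulVec_Amat_mulVec, hm, Matrix.mulVec_zero]
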